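/- Let (Xₙ) be a Markov chain on ℤ₊. Assume: (a) for every i ∈ ℤ₊ there is a positive decreasing function g_i on ℤ₊ such that (g_i(Xₙ)) is a supermartingale under P_i-dynamics, with p₁ := sup_{i≥1} g_i(i)/g_i(i−1) < 1; (b) p₂ := inf_{i≥0} P_i{X₁ ≥ i+1} > 0. Then inf_{i≥1} P_i{inf_{n≥1} Xₙ ≥ i+1} ≥ (1−p₁)p₂ > 0, and hence sup_{i∈ℤ₊} E_i e^{γℓ(i)} < ∞ for every γ < log(1/(1−(1−p₁)p₂)). -/

import Mathlib

open MeasureTheory Filter Topology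
open scoped ENNReal NNReal

structure MC where
  μ : ℕ → Measure (ℕ → ℕ)
  prob : ∀ i, IsProbabilityMeasure (μ i)
  start : ∀ i, μ i {ω | ω 0 = i} = 1
  P : ℕ → ℕ → ℝ≥0∞
  P_sum : ∀ i, ∑' j, P i j = 1
  markov : ∀ i, (μ i).map (fun ω n => ω (n + 1)) = Measure.sum fun j => P i j • μ j

noncomputable def qt (Q : ℕ → ℕ → ℝ≥0∞) (i : ℕ) : ℝ≥0∞ := ∑' j, Q i j

noncomputable def fQ (Q : ℕ → ℕ → ℝ≥0∞) (X : MC) (i : ℕ) : ℝ≥0∞ :=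
  ∫⁻ ω, ∏' n, qt Q (ω n) ∂(X.μ i)

def condC (Q : ℕ → ℕ → ℝ≥0∞) (X : MC) : Prop :=
  ∀ i, (∫⁻ ω, ∏' n, max (qt Q (ω n)) 1 ∂(X.μ i)) < ∞

noncomputable def Qpow (Q : ℕ → ℕ → ℝ≥0∞) : ℕ → ℕ → ℕ → ℝ≥0∞
  | 0 => fun i j => if i = j then 1 else 0
  | n + 1 => fun i j => ∑' k, Q i k * Qpow Q n k j

def Irred (Q : ℕ → ℕ → ℝ≥0∞) : Prop := ∀ i j, ∃ n, 0 < Qpow Q n i j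

noncomputable def locTime (j : ℕ) (ω : ℕ → ℕ) : ℝ≥0∞ := ∑' n, if ω n = j then 1 else 0

noncomputable def locExp (γ : ℝ) (j : ℕ) (ω : ℕ → ℕ) : ℝ≥0∞ :=
  ∏' n, if ω n = j then ENNReal.ofReal (Real.exp γ) else 1

noncomputable def deltaQ (Q : ℕ → ℕ → ℝ≥0∞) (j : ℕ) : ℝ := Real.log (qt Q j).toReal

noncomputable def jumpP (X : MC) (i : ℕ) (j : ℤ) : ℝ≥0∞ :=
  if 0 ≤ (i : ℤ) + j then X.P i ((i : ℤ) + j).toNat else 0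

/-!
Fix `i`. The positive decreasing supermartingale `g_{i+1}` is at least `g_{i+1}(i)` on `[0, i]`,
and a hitting probability is bounded by every nonnegative superharmonic function that is `≥ 1` on
the target; so from `j > i` the chain enters `[0, i]` with probability at most
`g_{i+1}(i+1) / g_{i+1}(i) ≤ p₁`. Jumping above `i` first (probability `≥ p₂`), the chain started
at `i` thus stays above `i` forever with probability `q ≥ (1 - p₁) p₂`, and returns to `i` with
probability at most `1 - q`. Restarting at each return gives the geometric tail
`P_i(ℓ(i) > k) ≤ (1 - q)^k`, so `E_i e^{γ ℓ(i)}` is bounded uniformly in `i` once `e^γ (1 - q) < 1`.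
-/

theorem one_add_pow_eq_one_add_mul_tsum (x : ℝ≥0∞) (n : ℕ) :
    (1 + x) ^ n = 1 + x * ∑' m, if m < n then (1 + x) ^ m else 0 := by
  rw [tsum_eq_sum (s := Finset.range n) fun m hm => if_neg (by simpa using hm),
    Finset.sum_congr rfl fun m hm => if_pos (Finset.mem_range.1 hm), add_comm 1 x,
    ← geom_sum_mul_add x n, mul_comm, add_comm]

theorem lintegral_one_add_pow_le {Ω : Type*} [MeasurableSpace Ω] {μ : Measure Ω}
    [IsProbabilityMeasure μ] {N : Ω → ℕ} (hN : Measurable N) {x r : ℝ≥0∞}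
    (htail : ∀ k, μ {ω | k < N ω} ≤ r ^ k) :
    ∫⁻ ω, (1 + x) ^ N ω ∂μ ≤ 1 + x * (1 - (1 + x) * r)⁻¹ := by
  have hmeas : ∀ m, Measurable fun ω => if m < N ω then (1 + x) ^ m else 0 := fun m =>
    Measurable.ite (hN measurableSet_Ioi) measurable_const measurable_const
  calc ∫⁻ ω, (1 + x) ^ N ω ∂μ
      = ∫⁻ ω, 1 + x * ∑' m, (if m < N ω then (1 + x) ^ m else 0) ∂μ :=
        lintegral_congr fun ω => one_add_pow_eq_one_add_mul_tsum x (N ω)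
    _ = 1 + x * ∑' m, (1 + x) ^ m * μ {ω | m < N ω} := by
        rw [lintegral_add_left measurable_const, lintegral_const, measure_univ, one_mul,
          lintegral_const_mul _ (Measurable.tsum hmeas),
          lintegral_tsum fun m => (hmeas m).aemeasurable]
        congr 2
        refine tsum_congr fun m => ?_
        rw [← lintegral_indicator_const (s := {ω | m < N ω}) (hN measurableSet_Ioi)]
        simp only [Set.indicator_apply, Set.mem_ofPred_eq]
    _ ≤ 1 + x * ∑' m, ((1 + x) * r) ^ m := by
        gcongr with m
        rw [mul_pow]
        gcongr
        exact htail m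
    _ = 1 + x * (1 - (1 + x) * r)⁻¹ := by rw [ENNReal.tsum_geometric]

theorem ENNReal.tprod_le_iSup_prod_range {f g : ℕ → ℝ≥0∞} (hfg : f ≤ g) (hg : ∀ n, 1 ≤ g n) :
    ∏' n, f n ≤ ⨆ k, ∏ n ∈ Finset.range k, g n := by
  by_cases hf : Multipliable f
  · refine le_of_tendsto' hf.hasProd fun s => ?_
    obtain ⟨k, hk⟩ := s.exists_nat_subset_range
    calc ∏ n ∈ s, f n ≤ ∏ n ∈ s, g n := Finset.prod_le_prod' fun n _ => hfg n
      _ ≤ ∏ n ∈ Finset.range k, g n :=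
          Finset.prod_le_prod_of_subset_of_one_le' hk fun n _ _ => hg n
      _ ≤ ⨆ k, ∏ n ∈ Finset.range k, g n := le_iSup (fun k => ∏ n ∈ Finset.range k, g n) k
  · rw [tprod_eq_one_of_not_multipliable hf]
    exact le_iSup_of_le 0 (Finset.prod_range_zero g).ge

theorem ENNReal.one_add_tsub_mul_inv_lt_top {c r : ℝ≥0∞} (hc : c ≠ ∞) (hr : r < 1)
    (hcr : c * r < 1) : 1 + (c - 1) * (1 - (1 + (c - 1)) * r)⁻¹ < ∞ := by
  have hbase : (1 + (c - 1)) * r < 1 := by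
    rcases le_total c 1 with hc1 | hc1
    · rwa [tsub_eq_zero_of_le hc1, add_zero, one_mul]
    · rwa [add_tsub_cancel_of_le hc1]
  exact ENNReal.add_lt_top.2 ⟨ENNReal.one_lt_top, ENNReal.mul_lt_top
    (tsub_le_self.trans_lt hc.lt_top) (ENNReal.inv_lt_top.2 (tsub_pos_of_lt hbase))⟩

theorem ofReal_exp_mul_one_sub_lt_one {γ q : ℝ} (hq₀ : 0 ≤ q) (hq₁ : q < 1)
    (hγ : γ < Real.log (1 / (1 - q))) :
    ENNReal.ofReal (Real.exp γ) * (1 - ENNReal.ofReal q) < 1 := by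
  have h : Real.exp γ * (1 - q) < 1 :=
    (lt_div_iff₀ (by linarith)).1 ((Real.lt_log_iff_exp_lt (one_div_pos.2 (by linarith))).1 hγ)
  rwa [← ENNReal.ofReal_lt_one, ENNReal.ofReal_mul (Real.exp_nonneg γ),
    ENNReal.ofReal_sub 1 hq₀, ENNReal.ofReal_one] at h

namespace MC

def shift (ω : ℕ → ℕ) : ℕ → ℕ := fun n => ω (n + 1)

def Hits (A : Set ℕ) : Set (ℕ → ℕ) := {ω | ∃ n, ω n ∈ A}

def visits (i n : ℕ) (ω : ℕ → ℕ) : ℕ := ((Finset.range n).filter fun m => ω m = i).card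

instance (X : MC) (i : ℕ) : IsProbabilityMeasure (X.μ i) := X.prob i

theorem measurable_shift : Measurable shift :=
  measurable_pi_lambda _ fun n => measurable_pi_apply (n + 1)

theorem measurableSet_coord_mem (m : ℕ) (s : Set ℕ) : MeasurableSet {ω : ℕ → ℕ | ω m ∈ s} :=
  measurable_pi_apply m MeasurableSet.of_discrete

theorem measurableSet_hits (A : Set ℕ) : MeasurableSet (Hits A) := by
  simpa only [Hits, Set.ofPred_exists] using
    MeasurableSet.iUnion fun n => measurableSet_coord_mem n A

theorem measurable_visits (i n : ℕ) : Measurable (visits i n) := by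
  unfold visits
  simp_rw [Finset.card_filter]
  exact Finset.measurable_sum _ fun m _ =>
    Measurable.ite (measurableSet_coord_mem m {i}) measurable_const measurable_const

theorem visits_succ (i n : ℕ) (ω : ℕ → ℕ) :
    visits i (n + 1) ω = visits i n (shift ω) + if ω 0 = i then 1 else 0 := by
  simp_rw [visits, Finset.card_filter, Finset.sum_range_succ']
  rfl

theorem visits_mono (i : ℕ) (ω : ℕ → ℕ) : Monotone fun n => visits i n ω := fun _ _ h =>
  Finset.card_le_card (Finset.filter_subset_filter _ (Finset.range_subset_range.2 h))

theorem prod_range_ite_eq_pow_visits (a : ℝ≥0∞) (i k : ℕ) (ω : ℕ → ℕ) :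
    ∏ n ∈ Finset.range k, (if ω n = i then a else 1) = a ^ visits i k ω := by
  rw [Finset.prod_ite, Finset.prod_const, Finset.prod_const_one, mul_one, visits]

variable (X : MC)

theorem ae_start (j : ℕ) : ∀ᵐ ω ∂X.μ j, ω 0 = j :=
  ae_iff.2 <| (prob_compl_eq_zero_iff (measurableSet_coord_mem 0 {j})).2 (X.start j)

theorem measure_congr_of_start {S T : Set (ℕ → ℕ)} (j : ℕ)
    (h : ∀ ω, ω 0 = j → (ω ∈ S ↔ ω ∈ T)) : X.μ j S = X.μ j T :=
  measure_congr <| (X.ae_start j).mono fun ω h0 => propext (h ω h0)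

theorem measure_preimage_shift {S : Set (ℕ → ℕ)} (hS : MeasurableSet S) (i : ℕ) :
    X.μ i (shift ⁻¹' S) = ∑' j, X.P i j * X.μ j S := by
  rw [← Measure.map_apply measurable_shift hS]
  change (X.μ i).map (fun ω n => ω (n + 1)) S = _
  simp [X.markov i, Measure.sum_apply _ hS]

theorem measure_start_mem (s : Set ℕ) (j : ℕ) : X.μ j {ω | ω 0 ∈ s} = s.indicator 1 j := by
  by_cases hj : j ∈ s
  · rw [Set.indicator_of_mem hj, Pi.one_apply, ← X.start j]
    exact X.measure_congr_of_start j fun _ h0 => by simp [h0, hj]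
  · rw [Set.indicator_of_notMem hj, ← measure_empty (μ := X.μ j)]
    exact X.measure_congr_of_start j fun _ h0 => by simp [h0, hj]

theorem measure_one_mem (s : Set ℕ) (i : ℕ) :
    X.μ i {ω | ω 1 ∈ s} = ∑' j, s.indicator (X.P i) j := by
  change X.μ i (shift ⁻¹' {ω | ω 0 ∈ s}) = _
  rw [X.measure_preimage_shift (measurableSet_coord_mem 0 s)]
  congr 1 with j
  by_cases hj : j ∈ s <;> simp [X.measure_start_mem, hj]

theorem measure_hits_self (i : ℕ) : X.μ i (Hits {i}) = 1 :=
  le_antisymm prob_le_one (X.start i ▸ measure_mono fun _ h => ⟨0, h⟩)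

theorem measure_hits_le_of_superharmonic {A : Set ℕ} {h : ℕ → ℝ≥0∞} (hA : ∀ j ∈ A, 1 ≤ h j)
    (hsup : ∀ j ∉ A, ∑' k, X.P j k * h k ≤ h j) (j : ℕ) : X.μ j (Hits A) ≤ h j := by
  set H : ℕ → Set (ℕ → ℕ) := fun n => {ω | ∃ m < n, ω m ∈ A}
  have hH_meas : ∀ n, MeasurableSet (H n) := fun n => by
    simpa only [H, Set.ofPred_exists, Set.ofPred_and] using
      MeasurableSet.iUnion fun m =>
        (MeasurableSet.const (m < n)).inter (measurableSet_coord_mem m A)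
  have hH : ∀ n j, X.μ j (H n) ≤ h j := by
    intro n
    induction n with
    | zero => simp [H]
    | succ n ih =>
      intro j
      by_cases hj : j ∈ A
      · exact prob_le_one.trans (hA j hj)
      calc X.μ j (H (n + 1)) = X.μ j (shift ⁻¹' H n) :=
            X.measure_congr_of_start j fun ω h0 => by
              simp only [H, shift, Set.mem_ofPred_eq, Set.mem_preimage, Nat.exists_lt_succ_left, h0,
                hj, false_or]
        _ = ∑' k, X.P j k * X.μ k (H n) := X.measure_preimage_shift (hH_meas n) j
        _ ≤ ∑' k, X.P j k * h k := ENNReal.tsum_le_tsum fun k => by gcongr; exact ih k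
        _ ≤ h j := hsup j hj
  have hUnion : Hits A = ⋃ n, H n := by
    ext ω
    simp only [Hits, H, Set.mem_ofPred_eq, Set.mem_iUnion]
    exact ⟨fun ⟨m, hm⟩ => ⟨m + 1, m, m.lt_succ_self, hm⟩, fun ⟨_, m, _, hm⟩ => ⟨m, hm⟩⟩
  have hH_mono : Monotone H := fun _ _ hn _ ⟨m, hm, hωm⟩ => ⟨m, hm.trans_le hn, hωm⟩
  rw [hUnion, hH_mono.measure_iUnion]
  exact iSup_le fun n => hH n j

theorem measure_hits_Iic_le_of_antitone {G : ℕ → ℝ} (hpos : ∀ j, 0 < G j) (hanti : Antitone G)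
    (hsup : ∀ j, ∑' k, X.P j k * ENNReal.ofReal (G k) ≤ ENNReal.ofReal (G j)) {i j : ℕ}
    (hij : i < j) : X.μ j (Hits (Set.Iic i)) ≤ ENNReal.ofReal (G (i + 1) / G i) := by
  refine (X.measure_hits_le_of_superharmonic (h := fun k => ENNReal.ofReal (G k / G i))
    (fun k hk => ?_) (fun k _ => ?_) j).trans (ENNReal.ofReal_le_ofReal ?_)
  · exact ENNReal.one_le_ofReal.2 ((one_le_div (hpos i)).2 (hanti hk))
  · simp_rw [div_eq_mul_inv, ENNReal.ofReal_mul (hpos _).le, ← mul_assoc, ENNReal.tsum_mul_right]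
    gcongr
    exact hsup k
  · exact div_le_div_of_nonneg_right (hanti hij) (hpos i).le

theorem mul_le_measure_escape {i : ℕ} {a b : ℝ≥0∞}
    (hhit : ∀ j, i < j → X.μ j (Hits (Set.Iic i)) ≤ a) (hjump : b ≤ X.μ i {ω | i + 1 ≤ ω 1}) :
    (1 - a) * b ≤ X.μ i {ω | ∀ n, 1 ≤ n → i + 1 ≤ ω n} := by
  have hescape : {ω : ℕ → ℕ | ∀ n, 1 ≤ n → i + 1 ≤ ω n} = shift ⁻¹' (Hits (Set.Iic i))ᶜ := by
    ext ω
    simp only [Set.mem_ofPred_eq, Set.mem_preimage, Set.mem_compl_iff, Hits, shift, Set.mem_Iic,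
      not_exists, not_le]
    exact ⟨fun h m => h (m + 1) m.succ_pos, fun h n hn => Nat.succ_pred_eq_of_pos hn ▸ h _⟩
  have hjump' : b ≤ ∑' j, (Set.Ioi i).indicator (X.P i) j := hjump.trans_eq (X.measure_one_mem _ i)
  rw [hescape, X.measure_preimage_shift (measurableSet_hits _).compl]
  calc (1 - a) * b ≤ ∑' j, (1 - a) * (Set.Ioi i).indicator (X.P i) j := by
        rw [ENNReal.tsum_mul_left]
        gcongr
    _ ≤ ∑' j, X.P i j * X.μ j (Hits (Set.Iic i))ᶜ := by
        refine ENNReal.tsum_le_tsum fun j => ?_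
        by_cases hj : i < j
        · rw [Set.indicator_of_mem (Set.mem_Ioi.2 hj), mul_comm,
            prob_compl_eq_one_sub (measurableSet_hits _)]
          gcongr
          exact hhit j hj
        · simp [hj]

theorem measure_return_le (i : ℕ) :
    X.μ i (shift ⁻¹' Hits {i}) ≤ 1 - X.μ i {ω | ∀ n, 1 ≤ n → i + 1 ≤ ω n} := by
  have hmeas : MeasurableSet (shift ⁻¹' Hits {i}) := measurable_shift (measurableSet_hits _)
  have hsub : {ω : ℕ → ℕ | ∀ n, 1 ≤ n → i + 1 ≤ ω n} ⊆ (shift ⁻¹' Hits {i})ᶜ :=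
    fun ω hesc ⟨m, hm⟩ => by
      have := hesc (m + 1) m.succ_pos
      simp_all [shift]
  calc X.μ i (shift ⁻¹' Hits {i}) = 1 - X.μ i (shift ⁻¹' Hits {i})ᶜ := by
        rw [← prob_compl_eq_one_sub hmeas.compl, compl_compl]
    _ ≤ 1 - X.μ i {ω | ∀ n, 1 ≤ n → i + 1 ≤ ω n} := by gcongr

-- The factor `μ j (Hits {i})` (the chain must reach `i` first) makes the induction work for `j ≠ i`.
theorem measure_visits_gt_le {i : ℕ} {r : ℝ≥0∞} (hr : X.μ i (shift ⁻¹' Hits {i}) ≤ r) (n : ℕ) :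
    ∀ k j, X.μ j {ω | k < visits i n ω} ≤ X.μ j (Hits {i}) * r ^ k := by
  induction n with
  | zero => simp [visits]
  | succ n ih =>
    have hstep : ∀ j k, X.μ j (shift ⁻¹' {ω | k < visits i n ω}) ≤
        X.μ j (shift ⁻¹' Hits {i}) * r ^ k := fun j k => by
      have hV : MeasurableSet {ω | k < visits i n ω} := measurable_visits i n measurableSet_Ioi
      rw [X.measure_preimage_shift hV,
        X.measure_preimage_shift (measurableSet_hits _), ← ENNReal.tsum_mul_right]
      refine ENNReal.tsum_le_tsum fun j' => ?_
      rw [mul_assoc]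
      gcongr
      exact ih k j'
    rintro (_ | k) j
    · rw [pow_zero, mul_one]
      refine measure_mono fun ω hω => ?_
      obtain ⟨m, hm⟩ := Finset.card_pos.1 hω
      exact ⟨m, (Finset.mem_filter.1 hm).2⟩
    by_cases hj : j = i
    · subst hj
      calc X.μ j {ω | k + 1 < visits j (n + 1) ω}
          = X.μ j (shift ⁻¹' {ω | k < visits j n ω}) :=
            X.measure_congr_of_start j fun ω h0 => by simp [visits_succ, h0]
        _ ≤ r * r ^ k := (hstep j k).trans (by gcongr)
        _ = X.μ j (Hits {j}) * r ^ (k + 1) := by rw [X.measure_hits_self, one_mul, pow_succ']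
    · calc X.μ j {ω | k + 1 < visits i (n + 1) ω}
          = X.μ j (shift ⁻¹' {ω | k + 1 < visits i n ω}) :=
            X.measure_congr_of_start j fun ω h0 => by simp [visits_succ, h0, hj]
        _ ≤ X.μ j (shift ⁻¹' Hits {i}) * r ^ (k + 1) := hstep j (k + 1)
        _ ≤ X.μ j (Hits {i}) * r ^ (k + 1) := by
            gcongr
            exact fun ω ⟨m, hm⟩ => ⟨m + 1, hm⟩

theorem lintegral_locExp_le {γ : ℝ} {i : ℕ} {x r : ℝ≥0∞} (hx : ENNReal.ofReal (Real.exp γ) ≤ 1 + x)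
    (hr : X.μ i (shift ⁻¹' Hits {i}) ≤ r) :
    ∫⁻ ω, locExp γ i ω ∂X.μ i ≤ 1 + x * (1 - (1 + x) * r)⁻¹ := by
  have hpow : ∀ ω, locExp γ i ω ≤ ⨆ k, (1 + x) ^ visits i k ω := fun ω => by
    simp_rw [← prod_range_ite_eq_pow_visits]
    exact ENNReal.tprod_le_iSup_prod_range (fun n => by dsimp only; split_ifs; exacts [hx, le_rfl])
      fun n => by split_ifs; exacts [le_self_add, le_rfl]
  calc ∫⁻ ω, locExp γ i ω ∂X.μ i ≤ ∫⁻ ω, ⨆ k, (1 + x) ^ visits i k ω ∂X.μ i := lintegral_mono hpow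
    _ = ⨆ k, ∫⁻ ω, (1 + x) ^ visits i k ω ∂X.μ i :=
        lintegral_iSup (fun k => measurable_from_top.comp (measurable_visits i k))
          fun k l hkl ω => pow_le_pow_right₀ le_self_add (visits_mono i ω hkl)
    _ ≤ 1 + x * (1 - (1 + x) * r)⁻¹ := iSup_le fun k =>
        lintegral_one_add_pow_le (measurable_visits i k) fun m =>
          (X.measure_visits_gt_le hr k m i).trans (mul_le_of_le_one_left' prob_le_one)

end MC

theorem stmt11 (X : MC) (g : ℕ → ℕ → ℝ) (p₁ p₂ : ℝ)
    (hgpos : ∀ i j, 0 < g i j) (hganti : ∀ i, Antitone (g i))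
    (hsmg : ∀ i j, ∑' k, X.P j k * ENNReal.ofReal (g i k) ≤ ENNReal.ofReal (g i j))
    (hp₁ : p₁ < 1) (hp₁d : ∀ i : ℕ, 1 ≤ i → g i i / g i (i - 1) ≤ p₁)
    (hp₂ : 0 < p₂) (hp₂d : ∀ i, ENNReal.ofReal p₂ ≤ X.μ i {ω | i + 1 ≤ ω 1}) :
    (∀ i : ℕ, 1 ≤ i →
      ENNReal.ofReal ((1 - p₁) * p₂) ≤ X.μ i {ω | ∀ n, 1 ≤ n → i + 1 ≤ ω n}) ∧
    ∀ γ : ℝ, γ < Real.log (1 / (1 - (1 - p₁) * p₂)) →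
      (⨆ i, ∫⁻ ω, locExp γ i ω ∂(X.μ i)) < ∞ := by
  have hp₁_pos : 0 < p₁ := (div_pos (hgpos 1 1) (hgpos 1 0)).trans_le (hp₁d 1 le_rfl)
  have hp₂_le_one : p₂ ≤ 1 := ENNReal.ofReal_le_one.1 ((hp₂d 0).trans prob_le_one)
  have hq_pos : 0 < (1 - p₁) * p₂ := mul_pos (by linarith) hp₂
  have hescape (i : ℕ) :
      ENNReal.ofReal ((1 - p₁) * p₂) ≤ X.μ i {ω | ∀ n, 1 ≤ n → i + 1 ≤ ω n} := by
    rw [ENNReal.ofReal_mul (by linarith), ENNReal.ofReal_sub 1 hp₁_pos.le, ENNReal.ofReal_one]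
    refine X.mul_le_measure_escape (fun j hij => ?_) (hp₂d i)
    exact (X.measure_hits_Iic_le_of_antitone (hgpos (i + 1)) (hganti _) (hsmg _) hij).trans
      (ENNReal.ofReal_le_ofReal (hp₁d (i + 1) (by omega)))
  refine ⟨fun i _ => hescape i, fun γ hγ => ?_⟩
  have hreturn (i : ℕ) : X.μ i (MC.shift ⁻¹' MC.Hits {i}) ≤ 1 - ENNReal.ofReal ((1 - p₁) * p₂) :=
    (X.measure_return_le i).trans (tsub_le_tsub_left (hescape i) 1)
  refine (iSup_le fun i => X.lintegral_locExp_le le_add_tsub (hreturn i)).trans_lt ?_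
  exact ENNReal.one_add_tsub_mul_inv_lt_top ENNReal.ofReal_ne_top
    (ENNReal.sub_lt_self ENNReal.one_ne_top one_ne_zero (ENNReal.ofReal_pos.2 hq_pos).ne')
    (ofReal_exp_mul_one_sub_lt_one hq_pos.le (by nlinarith) hγ)
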